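/- arXiv:math/0204170 — 2 statements merged into one kernel-verified Lean document; each statement's English description precedes it below -/
import Mathlib

section
/- Let k be a positive integer with gcd(k, 6) = 1 and let n ≥ 1. Let ν_n(k) be the number of primitive 0–1 vectors v of length n such that x(v) has denominator k in lowest terms, and let α_n(k) be the number of T-cycles of exact length n contained in D_k (orbits {x, T(x), …, T^{n−1}(x)} with x ∈ D_k, T^n(x) = x, and T^m(x) ≠ x for 1 ≤ m < n). Then ν_n(k) = n · α_n(k) (Proposition 3.1, claim 3). -/
/-- The `3x+1` function on rationals: `T x = x/2` if the numerator of `x` is even,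
and `T x = (3x+1)/2` if the numerator of `x` is odd. -/
noncomputable def T (x : ℚ) : ℚ := if Even x.num then x / 2 else (3 * x + 1) / 2

/-- `ρ(v) = ∑_{j=0}^{n-1} v_j ⬝ 3^{v_{j+1} + ⋯ + v_{n-1}} ⬝ 2^j`, for a `0-1` vector
encoded as a list. -/
def rhoL : List ℕ → ℕ
  | [] => 0
  | a :: t => a * 3 ^ t.sum + 2 * rhoL t

/-- `x(v) = ρ(v) / (2^n - 3^{ω(v)})`, where `n` is the length of `v` and
`ω(v)` is the sum of its entries. -/
noncomputable def xL (l : List ℕ) : ℚ :=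
  (rhoL l : ℚ) / ((2 : ℚ) ^ l.length - (3 : ℚ) ^ l.sum)

/-- A vector is primitive if its cyclic rotations are pairwise distinct, i.e. no
nontrivial rotation fixes it. -/
def Primitive (l : List ℕ) : Prop := ∀ m, 1 ≤ m → m < l.length → l.rotate m ≠ l

/-!
For a 0–1 vector `v` the denominator `2ⁿ - 3^ω(v)` of `x(v)` is odd, so the parity of `x(v)` is
`v₀`, and `T (x v) = x (rotate v 1)`: on `x(v)` the map `T` acts as rotation of `v`. Conversely,
iterating `2 T y = 3^b y + b` (with `b` the parity bit of `y`) shows that a point of period `n`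
equals `x` of its parity vector, and `x(v)` has parity vector `v`. Hence `x` is a bijection from
primitive vectors of length `n` onto the points of exact period `n`. When `gcd(k, 6) = 1`, `T`
preserves the denominator `k`, so these points in `D_k` split into `T`-cycles of `n` points each.
-/

open Function Set

theorem Set.ncard_eq_mul_ncard_image_of_fibers {α β : Type*} {s : Set α} (hs : s.Finite)
    {g : α → β} {n : ℕ} (h : ∀ x ∈ s, {y ∈ s | g y = g x}.ncard = n) :
    s.ncard = n * (g '' s).ncard := by
  classical
  lift s to Finset α using hs
  rw [← Finset.coe_image, ncard_coe_finset, ncard_coe_finset, Finset.card_eq_sum_card_image g s,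
    Finset.sum_const_nat, mul_comm]
  simp only [Finset.forall_mem_image]
  intro x hx
  rw [← h x hx, ← ncard_coe_finset, Finset.coe_filter]
  rfl

namespace Function

variable {α : Type*} {f : α → α} {x y : α} {n : ℕ}

theorem minimalPeriod_eq_iff (hn : 0 < n) :
    minimalPeriod f x = n ↔ f^[n] x = x ∧ ∀ m, 0 < m → m < n → f^[m] x ≠ x := by
  constructor
  · rintro rfl
    exact ⟨iterate_minimalPeriod, fun m hm hlt =>
      not_isPeriodicPt_of_pos_of_lt_minimalPeriod hm.ne' hlt⟩
  · rintro ⟨hx, hmin⟩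
    have hx' : IsPeriodicPt f n x := hx
    by_contra hne
    exact hmin _ (hx'.minimalPeriod_pos hn) (lt_of_le_of_ne (hx'.minimalPeriod_le hn) hne)
      iterate_minimalPeriod

theorem range_iterate_eq_of_mem (hx : x ∈ periodicPts f) (hy : y ∈ range (f^[·] x)) :
    range (f^[·] y) = range (f^[·] x) := by
  obtain ⟨j, rfl⟩ := hy
  have hj : f^[j] x ∈ periodicPts f :=
    mk_mem_periodicPts (minimalPeriod_pos_of_mem_periodicPts hx)
      ((isPeriodicPt_minimalPeriod f x).apply_iterate j)
  ext z
  rw [mem_range, mem_range, ← mem_periodicOrbit_iff hx, ← mem_periodicOrbit_iff hj,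
    periodicOrbit_apply_iterate_eq hx]

theorem ncard_range_iterate (hx : x ∈ periodicPts f) :
    (range (f^[·] x)).ncard = minimalPeriod f x := by
  have hrange : range (f^[·] x) = (f^[·] x) '' Iio (minimalPeriod f x) := by
    refine (image_subset_range _ _).antisymm' ?_
    rintro _ ⟨j, rfl⟩
    exact ⟨j % minimalPeriod f x, Nat.mod_lt _ (minimalPeriod_pos_of_mem_periodicPts hx),
      iterate_mod_minimalPeriod_eq⟩
  rw [hrange, iterate_injOn_Iio_minimalPeriod.ncard_image, ncard_Iio_nat]

theorem ncard_eq_mul_ncard_image_range_iterate {S : Set α} (hS : S.Finite) (hn : 0 < n)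
    (hfS : MapsTo f S S) (hper : ∀ x ∈ S, minimalPeriod f x = n) :
    S.ncard = n * ((fun x => range (f^[·] x)) '' S).ncard := by
  refine ncard_eq_mul_ncard_image_of_fibers hS fun x hx => ?_
  have hxp : x ∈ periodicPts f := minimalPeriod_pos_iff_mem_periodicPts.1 (hper x hx ▸ hn)
  have hfiber : {y ∈ S | range (f^[·] y) = range (f^[·] x)} = range (f^[·] x) := by
    ext y
    refine ⟨fun ⟨_, hy⟩ => hy ▸ mem_range_self 0, fun hy => ⟨?_, range_iterate_eq_of_mem hxp hy⟩⟩
    obtain ⟨j, rfl⟩ := hy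
    exact hfS.iterate j hx
  rw [hfiber, ncard_range_iterate hxp, hper x hx]

end Function

theorem Rat.even_num_intCast_div_of_odd {r d : ℤ} (hd : Odd d) :
    Even ((r : ℚ) / d).num ↔ Even r := by
  set q := (r : ℚ) / d with hq
  obtain ⟨c, hr, hdc⟩ := Rat.num_den_mk (by rintro rfl; simp at hd)
    (hq.trans (Rat.divInt_eq_div r d).symm)
  have hc : Odd c := Int.Odd.of_mul_left (hdc ▸ hd)
  rw [hr, Int.even_mul, or_iff_right (Int.not_even_iff_odd.2 hc)]

theorem Rat.den_eq_of_mul_eq {y : ℚ} {c : ℤ} {d : ℕ} (hd : 0 < d) (hcop : IsCoprime c d)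
    (h : y * d = c) : y.den = d := by
  have hy : y = (c : ℚ) / ((d : ℤ) : ℚ) := by
    rw [← h]
    push_cast
    field_simp
  have hden := Rat.den_div_eq_of_coprime (a := c) (b := d) (by exact_mod_cast hd)
    (Int.isCoprime_iff_gcd_eq_one.mp hcop)
  rw [hy]
  exact_mod_cast hden

def parityBit (x : ℚ) : ℕ := if Even x.num then 0 else 1

theorem T_eq_parityBit (x : ℚ) : T x = (3 ^ parityBit x * x + parityBit x) / 2 := by
  unfold T parityBit
  split_ifs <;> simp

theorem den_T {x : ℚ} (hx : Nat.Coprime x.den 6) : (T x).den = x.den := by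
  have hnd : IsCoprime x.num x.den := Int.isCoprime_iff_gcd_eq_one.mpr x.reduced
  have h3 : IsCoprime (3 : ℤ) x.den :=
    Nat.isCoprime_iff_coprime.mpr (Nat.Coprime.coprime_dvd_left (by norm_num) hx.symm)
  have h2 : Odd (x.den : ℤ) := by
    have : Nat.Coprime 2 x.den := Nat.Coprime.coprime_dvd_left (by norm_num) hx.symm
    exact_mod_cast Nat.coprime_two_left.mp this
  have hmul := Rat.mul_den_eq_num x
  -- `T x * den x` is half of `num x`, resp. of `3 num x + den x`, both coprime to `den x`.
  unfold T
  split_ifs with he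
  · obtain ⟨c, hc⟩ := he
    refine Rat.den_eq_of_mul_eq (c := c) x.pos (hnd.of_isCoprime_of_dvd_left ⟨2, by omega⟩) ?_
    have : (x.num : ℚ) = c + c := by exact_mod_cast hc
    linear_combination hmul / 2 + this / 2
  · obtain ⟨c, hc⟩ : Even (3 * x.num + x.den) :=
      (Odd.mul (by decide) (Int.not_even_iff_odd.mp he)).add_odd h2
    have hcop : IsCoprime (3 * x.num + x.den) x.den := by
      simpa using (h3.mul_left hnd).add_mul_left_left 1
    refine Rat.den_eq_of_mul_eq (c := c) x.pos (hcop.of_isCoprime_of_dvd_left ⟨2, by omega⟩) ?_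
    have : (3 * x.num + x.den : ℚ) = c + c := by exact_mod_cast hc
    linear_combination 3 * hmul / 2 + this / 2

theorem odd_two_pow_sub_three_pow {m : ℕ} (hm : m ≠ 0) (s : ℕ) : Odd ((2 : ℤ) ^ m - 3 ^ s) :=
  (Int.even_pow.2 ⟨even_two, hm⟩).sub_odd (Odd.pow (by decide))

theorem two_pow_sub_three_pow_ne_zero {m : ℕ} (hm : m ≠ 0) (s : ℕ) :
    (2 : ℚ) ^ m - 3 ^ s ≠ 0 := by
  intro h
  have h' : (2 : ℤ) ^ m - 3 ^ s = 0 := by exact_mod_cast h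
  simpa [h'] using odd_two_pow_sub_three_pow hm s

theorem rhoL_append_singleton (t : List ℕ) (a : ℕ) :
    rhoL (t ++ [a]) = 3 ^ a * rhoL t + a * 2 ^ t.length := by
  induction t with
  | nil => simp [rhoL]
  | cons b t ih =>
    simp only [List.cons_append, rhoL, List.sum_append, List.sum_cons, List.sum_nil, add_zero, ih,
      List.length_cons]
    ring

theorem xL_append_singleton (t : List ℕ) (a : ℕ) :
    xL (t ++ [a]) = (3 ^ a * xL (a :: t) + a) / 2 := by
  have hD := two_pow_sub_three_pow_ne_zero (Nat.succ_ne_zero t.length) (a + t.sum)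
  rw [pow_succ, pow_add] at hD
  simp only [xL, rhoL, rhoL_append_singleton, List.length_append, List.length_cons,
    List.length_nil, List.sum_append, List.sum_cons, List.sum_nil]
  rw [add_comm t.sum, add_zero, zero_add, pow_succ, pow_add]
  push_cast
  field_simp
  ring

theorem parityBit_xL_cons {a : ℕ} (ha : a = 0 ∨ a = 1) (t : List ℕ) :
    parityBit (xL (a :: t)) = a := by
  have hxL : xL (a :: t) =
      ((rhoL (a :: t) : ℤ) : ℚ) / (((2 : ℤ) ^ (t.length + 1) - 3 ^ (a :: t).sum : ℤ) : ℚ) := by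
    simp [xL]
  have heven : Even (xL (a :: t)).num ↔ Even a := by
    rw [hxL, Rat.even_num_intCast_div_of_odd (odd_two_pow_sub_three_pow (Nat.succ_ne_zero _) _),
      Int.even_coe_nat]
    have h3 : ¬ Even 3 := by decide
    simp [rhoL, Nat.even_add, Nat.even_mul, Nat.even_pow, h3]
  rcases ha with rfl | rfl <;> simp [parityBit, heven]

theorem T_xL {l : List ℕ} (hl : ∀ a ∈ l, a = 0 ∨ a = 1) : T (xL l) = xL (l.rotate 1) := by
  cases l with
  | nil => simp [xL, rhoL, T]
  | cons a t =>
    rw [List.rotate_cons_succ, List.rotate_zero, T_eq_parityBit,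
      parityBit_xL_cons (hl a List.mem_cons_self), xL_append_singleton]

theorem iterate_T_xL {l : List ℕ} (hl : ∀ a ∈ l, a = 0 ∨ a = 1) (m : ℕ) :
    T^[m] (xL l) = xL (l.rotate m) := by
  induction m with
  | zero => simp
  | succ m ih =>
    rw [iterate_succ_apply', ih, T_xL fun a ha => hl a (List.mem_rotate.1 ha), List.rotate_rotate]

noncomputable def parityVector (n : ℕ) (x : ℚ) : List ℕ :=
  (List.range n).map fun j => parityBit (T^[j] x)

@[simp]
theorem length_parityVector (n : ℕ) (x : ℚ) : (parityVector n x).length = n := by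
  simp [parityVector]

theorem parityVector_succ (n : ℕ) (x : ℚ) :
    parityVector (n + 1) x = parityVector n x ++ [parityBit (T^[n] x)] := by
  simp [parityVector, List.range_succ]

theorem parityVector_binary (n : ℕ) (x : ℚ) : ∀ a ∈ parityVector n x, a = 0 ∨ a = 1 := by
  simp only [parityVector, List.mem_map, forall_exists_index, and_imp]
  rintro _ j - rfl
  unfold parityBit
  split_ifs <;> simp

theorem two_pow_mul_iterate_T (n : ℕ) (x : ℚ) :
    2 ^ n * T^[n] x = 3 ^ (parityVector n x).sum * x + rhoL (parityVector n x) := by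
  induction n with
  | zero => simp [parityVector, rhoL]
  | succ n ih =>
    rw [parityVector_succ, List.sum_append, rhoL_append_singleton, iterate_succ_apply',
      T_eq_parityBit]
    push_cast [List.sum_singleton, length_parityVector]
    linear_combination (3 : ℚ) ^ parityBit (T^[n] x) * ih

theorem xL_parityVector {n : ℕ} (hn : n ≠ 0) {x : ℚ} (hx : T^[n] x = x) :
    xL (parityVector n x) = x := by
  have h := two_pow_mul_iterate_T n x
  rw [hx] at h
  rw [xL, length_parityVector, div_eq_iff (two_pow_sub_three_pow_ne_zero hn _)]
  linear_combination -h

theorem parityVector_xL {l : List ℕ} (hl : ∀ a ∈ l, a = 0 ∨ a = 1) :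
    parityVector l.length (xL l) = l := by
  refine List.ext_getElem (length_parityVector _ _) fun j _ hj => ?_
  simp only [parityVector, List.getElem_map, List.getElem_range, iterate_T_xL hl,
    List.rotate_eq_drop_append_take hj.le, List.drop_eq_getElem_cons hj, List.cons_append]
  exact parityBit_xL_cons (hl _ (List.getElem_mem hj)) _

def binaryVectors (n : ℕ) : Set (List ℕ) := {l | l.length = n ∧ ∀ a ∈ l, a = 0 ∨ a = 1}

theorem finite_binaryVectors (n : ℕ) : (binaryVectors n).Finite := by
  refine ((List.finite_length_eq (Fin 2) n).image (List.map Fin.val)).subset ?_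
  rintro l ⟨rfl, hl⟩
  refine ⟨l.map (Fin.ofNat 2), by simp, ?_⟩
  rw [List.map_map]
  conv_rhs => rw [← List.map_id l]
  refine List.map_congr_left fun a ha => ?_
  rcases hl a ha with rfl | rfl <;> rfl

theorem xL_injOn (n : ℕ) : InjOn xL (binaryVectors n) := by
  rintro l ⟨rfl, hl⟩ l' ⟨hlen, hl'⟩ h
  rw [← parityVector_xL hl, ← parityVector_xL hl', h, hlen]

theorem minimalPeriod_T_xL_eq_length_iff {l : List ℕ} (hl : ∀ a ∈ l, a = 0 ∨ a = 1)
    (hne : l ≠ []) : minimalPeriod T (xL l) = l.length ↔ Primitive l := by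
  rw [minimalPeriod_eq_iff (List.length_pos_iff.2 hne), iterate_T_xL hl, List.rotate_length,
    eq_self_iff_true, true_and, Primitive]
  refine forall₃_congr fun m _ _ => ?_
  rw [iterate_T_xL hl]
  exact ((xL_injOn l.length).eq_iff
    ⟨List.length_rotate _ _, fun a ha => hl a (List.mem_rotate.1 ha)⟩ ⟨rfl, hl⟩).not

def cyclePts (k n : ℕ) : Set ℚ := {x | x.den = k ∧ minimalPeriod T x = n}

theorem mapsTo_T_cyclePts {k n : ℕ} (hk : Nat.Coprime k 6) (hn : 0 < n) :
    MapsTo T (cyclePts k n) (cyclePts k n) := by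
  rintro x ⟨hden, hper⟩
  exact ⟨(den_T (hden ▸ hk)).trans hden,
    (minimalPeriod_apply (minimalPeriod_pos_iff_mem_periodicPts.1 (hper ▸ hn))).trans hper⟩

theorem image_xL_setOf_primitive {n : ℕ} (hn : n ≠ 0) (k : ℕ) :
    xL '' {l | l.length = n ∧ (∀ a ∈ l, a = 0 ∨ a = 1) ∧ Primitive l ∧ (xL l).den = k} =
      cyclePts k n := by
  ext x
  constructor
  · rintro ⟨l, ⟨rfl, hl, hprim, hden⟩, rfl⟩
    exact ⟨hden, (minimalPeriod_T_xL_eq_length_iff hl (by rintro rfl; exact hn rfl)).2 hprim⟩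
  · rintro ⟨hden, hper⟩
    have hx : xL (parityVector n x) = x := xL_parityVector hn (hper ▸ iterate_minimalPeriod)
    have hne : parityVector n x ≠ [] := by
      rw [← List.length_pos_iff, length_parityVector]
      omega
    refine ⟨parityVector n x,
      ⟨length_parityVector n x, parityVector_binary n x, ?_, by rw [hx, hden]⟩, hx⟩
    rw [← minimalPeriod_T_xL_eq_length_iff (parityVector_binary n x) hne, hx, hper,
      length_parityVector]

theorem stmt_10_general (k : ℕ) (h6 : Nat.gcd k 6 = 1) (n : ℕ) (hn : 1 ≤ n) :
    {l : List ℕ | l.length = n ∧ (∀ a ∈ l, a = 0 ∨ a = 1) ∧ Primitive l ∧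
        (xL l).den = k}.ncard =
    n * {c : Set ℚ | ∃ x : ℚ, x.den = k ∧ T^[n] x = x ∧
        (∀ m, 1 ≤ m → m < n → T^[m] x ≠ x) ∧
        c = {y | ∃ j : ℕ, T^[j] x = y}}.ncard := by
  have hbinary : {l : List ℕ | l.length = n ∧ (∀ a ∈ l, a = 0 ∨ a = 1) ∧ Primitive l ∧
      (xL l).den = k} ⊆ binaryVectors n := fun l hl => ⟨hl.1, hl.2.1⟩
  have himage := image_xL_setOf_primitive (Nat.one_le_iff_ne_zero.mp hn) k
  have hcycles : {c : Set ℚ | ∃ x : ℚ, x.den = k ∧ T^[n] x = x ∧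
      (∀ m, 1 ≤ m → m < n → T^[m] x ≠ x) ∧ c = {y | ∃ j : ℕ, T^[j] x = y}} =
      (fun x => range (T^[·] x)) '' cyclePts k n := by
    ext c
    constructor
    · rintro ⟨x, hden, hx, hmin, rfl⟩
      exact ⟨x, ⟨hden, (minimalPeriod_eq_iff hn).2 ⟨hx, hmin⟩⟩, rfl⟩
    · rintro ⟨x, ⟨hden, hper⟩, rfl⟩
      obtain ⟨hx, hmin⟩ := (minimalPeriod_eq_iff hn).1 hper
      exact ⟨x, hden, hx, hmin, rfl⟩
  rw [hcycles, ← ncard_eq_mul_ncard_image_range_iterate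
      (himage ▸ ((finite_binaryVectors n).subset hbinary).image xL) hn (mapsTo_T_cyclePts h6 hn)
      fun x hx => hx.2,
    ← himage, ((xL_injOn n).mono hbinary).ncard_image]

/-- Proposition 3.1, claim 3: the number `ν_n(k)` of primitive `0-1` vectors of
length `n` with `x(v)` of denominator `k` equals `n` times the number `α_n(k)`
of `T`-cycles of exact length `n` contained in `D_k`. -/
theorem stmt_10 (k : ℕ) (hk : 0 < k) (h6 : Nat.gcd k 6 = 1) (n : ℕ) (hn : 1 ≤ n) :
    {l : List ℕ | l.length = n ∧ (∀ a ∈ l, a = 0 ∨ a = 1) ∧ Primitive l ∧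
        (xL l).den = k}.ncard =
    n * {c : Set ℚ | ∃ x : ℚ, x.den = k ∧ T^[n] x = x ∧
        (∀ m, 1 ≤ m → m < n → T^[m] x ≠ x) ∧
        c = {y | ∃ j : ℕ, T^[j] x = y}}.ncard :=
  stmt_10_general k h6 n hn
end

section
/- Let n ≥ 1 and let v₁, v₂ be 0–1 vectors of length n that are not cyclic rotations of one another. Then the T-cycles through x(v₁) and through x(v₂) are disjoint: x(v₂) ≠ T^j(x(v₁)) for every j with 0 ≤ j < n. In particular, if moreover ω(v₁) = ω(v₂) and x(v₁), x(v₂) have the same denominator k in lowest terms, then D_k contains two distinct cycles with the same length invariant λ = n and the same number ω of odd elements (the repetition phenomenon). -/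
/-- `ω(v) = v_0 + ⋯ + v_{n-1}`. -/
def omegaF {n : ℕ} (v : Fin n → ℕ) : ℕ := ∑ j, v j

/-- `ρ(v) = ∑_{j=0}^{n-1} v_j ⬝ 3^{v_{j+1} + ⋯ + v_{n-1}} ⬝ 2^j`. -/
def rhoF {n : ℕ} (v : Fin n → ℕ) : ℕ :=
  ∑ j : Fin n, v j * 3 ^ (∑ i : Fin n, if (j : ℕ) < (i : ℕ) then v i else 0) * 2 ^ (j : ℕ)

/-- `x(v) = ρ(v) / (2^n - 3^{ω(v)})`. -/
noncomputable def xF {n : ℕ} (v : Fin n → ℕ) : ℚ :=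
  (rhoF v : ℚ) / ((2 : ℚ) ^ n - (3 : ℚ) ^ omegaF v)

open Function

theorem Rat.den_intCast_div_dvd (a b : ℤ) : ((a / b : ℚ).den : ℤ) ∣ b := by
  simpa [Rat.divInt_eq_div] using Rat.den_dvd a b

theorem Rat.even_num_intCast_div_iff {a b : ℤ} (hb : Odd b) :
    Even (a / b : ℚ).num ↔ Even a := by
  have hb0 : b ≠ 0 := by rintro rfl; simp at hb
  obtain ⟨c, ha, hbc⟩ := Rat.num_den_mk hb0 (Rat.divInt_eq_div a b).symm
  have hc : Odd c := (Int.odd_mul.mp (hbc ▸ hb)).1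
  calc Even (a / b : ℚ).num ↔ Even (c * (a / b : ℚ).num) :=
        (Int.even_mul.trans (or_iff_right (Int.not_even_iff_odd.mpr hc))).symm
    _ ↔ Even a := by rw [← ha]

theorem odd_two_pow_sub_three_pow_s16 {n : ℕ} (hn : n ≠ 0) (k : ℕ) : Odd ((2 : ℤ) ^ n - 3 ^ k) :=
  ((Int.even_pow' hn).mpr even_two).sub_odd (Odd.pow (by decide))

section CyclicShift

variable {α : Type*} {n : ℕ}

def cyclicShift (v : Fin n → α) (m : ℕ) : Fin n → α :=
  fun i => v ⟨((i : ℕ) + m) % n, Nat.mod_lt _ i.pos⟩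

theorem cyclicShift_zero (v : Fin n → α) : cyclicShift v 0 = v := by
  funext i
  simp [cyclicShift, Nat.mod_eq_of_lt i.isLt]

theorem cyclicShift_self (v : Fin n → α) : cyclicShift v n = v := by
  funext i
  simp [cyclicShift, Nat.mod_eq_of_lt i.isLt]

theorem cyclicShift_succ (v : Fin n → α) (m : ℕ) :
    cyclicShift v (m + 1) = cyclicShift (cyclicShift v m) 1 := by
  funext i
  simp only [cyclicShift, Nat.mod_add_mod, add_right_comm, add_assoc]

theorem cyclicShift_apply_zero {m : ℕ} (v : Fin (m + 1) → α) (i : Fin (m + 1)) :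
    cyclicShift v i 0 = v i := by
  simp [cyclicShift, Nat.mod_eq_of_lt i.isLt]

theorem cyclicShift_one_eq_snoc {m : ℕ} (v : Fin (m + 1) → α) :
    cyclicShift v 1 = Fin.snoc (Fin.tail v) (v 0) := by
  funext i
  induction i using Fin.lastCases with
  | last => simp [cyclicShift]
  | cast i =>
    simp only [cyclicShift, Fin.snoc_castSucc, Fin.tail, Fin.val_castSucc]
    congr 1
    ext
    simp [Nat.mod_eq_of_lt (Nat.succ_lt_succ i.isLt)]

end CyclicShift

theorem omegaF_cons {m : ℕ} (a : ℕ) (u : Fin m → ℕ) :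
    omegaF (Fin.cons a u : Fin (m + 1) → ℕ) = a + omegaF u :=
  Fin.sum_cons a u

theorem omegaF_snoc {m : ℕ} (u : Fin m → ℕ) (a : ℕ) :
    omegaF (Fin.snoc u a : Fin (m + 1) → ℕ) = omegaF u + a :=
  Fin.sum_snoc a u

theorem rhoF_cons {m : ℕ} (a : ℕ) (u : Fin m → ℕ) :
    rhoF (Fin.cons a u : Fin (m + 1) → ℕ) = a * 3 ^ omegaF u + 2 * rhoF u := by
  simp [rhoF, omegaF, Fin.sum_univ_succ, Finset.mul_sum, pow_succ, mul_comm, mul_left_comm,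
    mul_assoc]

theorem rhoF_snoc {m : ℕ} (u : Fin m → ℕ) (a : ℕ) :
    rhoF (Fin.snoc u a : Fin (m + 1) → ℕ) = 3 ^ a * rhoF u + a * 2 ^ m := by
  have h (i : Fin m) : ¬ Fin.last m < i.castSucc := (Fin.castSucc_lt_last i).not_gt
  simp [rhoF, Fin.sum_univ_castSucc, Finset.mul_sum, pow_add, h, mul_comm, mul_left_comm]

theorem xF_eq_intCast_div {n : ℕ} (v : Fin n → ℕ) :
    xF v = ((rhoF v : ℤ) : ℚ) / (((2 : ℤ) ^ n - 3 ^ omegaF v : ℤ) : ℚ) := by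
  push_cast
  rfl

theorem odd_den_xF {n : ℕ} (hn : n ≠ 0) (v : Fin n → ℕ) : Odd (xF v).den := by
  obtain ⟨c, hc⟩ := xF_eq_intCast_div v ▸ Rat.den_intCast_div_dvd _ _
  have := (odd_two_pow_sub_three_pow_s16 hn (omegaF v))
  rw [hc] at this
  exact (Int.odd_coe_nat _).mp (Int.odd_mul.mp this).1

theorem even_num_xF_cons_iff {m : ℕ} (a : ℕ) (u : Fin m → ℕ) :
    Even (xF (Fin.cons a u : Fin (m + 1) → ℕ)).num ↔ Even a := by
  rw [xF_eq_intCast_div,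
    Rat.even_num_intCast_div_iff (odd_two_pow_sub_three_pow_s16 m.succ_ne_zero _), Int.even_coe_nat,
    rhoF_cons]
  simp [Nat.even_add, Nat.even_mul, parity_simps]

theorem T_xF_cons {m a : ℕ} (ha : a = 0 ∨ a = 1) (u : Fin m → ℕ) :
    T (xF (Fin.cons a u : Fin (m + 1) → ℕ)) = xF (Fin.snoc u a : Fin (m + 1) → ℕ) := by
  have hpar := even_num_xF_cons_iff a u
  have hD : (2 : ℤ) ^ (m + 1) - 3 ^ (a + omegaF u) ≠ 0 := by
    intro h
    simpa [h] using odd_two_pow_sub_three_pow_s16 m.succ_ne_zero (a + omegaF u)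
  have hDq : (2 : ℚ) ^ (m + 1) - 3 ^ (a + omegaF u) ≠ 0 := by exact_mod_cast hD
  rcases ha with rfl | rfl
  · have he : Even (xF (Fin.cons 0 u : Fin (m + 1) → ℕ)).num := hpar.mpr ⟨0, rfl⟩
    rw [T, if_pos he, xF, xF, rhoF_cons, rhoF_snoc, omegaF_cons, omegaF_snoc]
    simp only [zero_add, add_zero] at hDq ⊢
    push_cast
    field_simp
    ring
  · have ho : ¬ Even (xF (Fin.cons 1 u : Fin (m + 1) → ℕ)).num := fun h => by
      simpa using hpar.mp h
    rw [T, if_neg ho, xF, xF, rhoF_cons, rhoF_snoc, omegaF_cons, omegaF_snoc, add_comm 1]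
    rw [add_comm 1] at hDq
    push_cast
    field_simp
    ring

theorem T_xF {n : ℕ} (hn : n ≠ 0) {v : Fin n → ℕ} (h01 : ∀ i, v i = 0 ∨ v i = 1) :
    T (xF v) = xF (cyclicShift v 1) := by
  obtain ⟨m, rfl⟩ := Nat.exists_eq_succ_of_ne_zero hn
  rw [cyclicShift_one_eq_snoc, ← T_xF_cons (h01 0), Fin.cons_self_tail]

theorem iterate_T_xF {n : ℕ} (hn : n ≠ 0) {v : Fin n → ℕ} (h01 : ∀ i, v i = 0 ∨ v i = 1)
    (j : ℕ) : T^[j] (xF v) = xF (cyclicShift v j) := by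
  induction j with
  | zero => rw [iterate_zero_apply, cyclicShift_zero]
  | succ j ih =>
    rw [iterate_succ_apply', ih, T_xF hn (v := cyclicShift v j) fun _ => h01 _,
      ← cyclicShift_succ]

theorem isPeriodicPt_T_xF {n : ℕ} (hn : n ≠ 0) {v : Fin n → ℕ}
    (h01 : ∀ i, v i = 0 ∨ v i = 1) : IsPeriodicPt T n (xF v) := by
  rw [IsPeriodicPt, IsFixedPt, iterate_T_xF hn h01, cyclicShift_self]

theorem head_eq_of_xF_eq {m : ℕ} {v w : Fin (m + 1) → ℕ} (hv : ∀ i, v i = 0 ∨ v i = 1)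
    (hw : ∀ i, w i = 0 ∨ w i = 1) (h : xF v = xF w) : v 0 = w 0 := by
  have hpar := even_num_xF_cons_iff (v 0) (Fin.tail v)
  rw [Fin.cons_self_tail, h, ← Fin.cons_self_tail w, even_num_xF_cons_iff] at hpar
  rcases hv 0 with h1 | h1 <;> rcases hw 0 with h2 | h2 <;> simp_all

theorem eq_of_xF_eq {n : ℕ} (hn : n ≠ 0) {v w : Fin n → ℕ}
    (hv : ∀ i, v i = 0 ∨ v i = 1) (hw : ∀ i, w i = 0 ∨ w i = 1) (h : xF v = xF w) : v = w := by
  obtain ⟨m, rfl⟩ := Nat.exists_eq_succ_of_ne_zero hn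
  funext i
  have : cyclicShift v i 0 = cyclicShift w i 0 := head_eq_of_xF_eq (fun _ => hv _)
    (fun _ => hw _) (by rw [← iterate_T_xF hn hv, ← iterate_T_xF hn hw, h])
  rwa [cyclicShift_apply_zero, cyclicShift_apply_zero] at this

theorem exists_T_eq_div_den {y : ℚ} (hy : Odd y.den) : ∃ c : ℤ, T y = c / y.den := by
  have hden : (y.den : ℚ) ≠ 0 := by exact_mod_cast y.den_nz
  unfold T
  split_ifs with he
  · obtain ⟨c, hc⟩ := he
    refine ⟨c, ?_⟩
    conv_lhs => rw [← Rat.num_div_den y]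
    rw [hc]
    push_cast
    field_simp
    ring
  · obtain ⟨c, hc⟩ : Even (3 * y.num + y.den) :=
      (Odd.mul (by decide) (Int.not_even_iff_odd.mp he)).add_odd ((Int.odd_coe_nat _).mpr hy)
    refine ⟨c, ?_⟩
    conv_lhs => rw [← Rat.num_div_den y]
    have hcq : 3 * (y.num : ℚ) + y.den = c + c := by exact_mod_cast hc
    field_simp
    linear_combination hcq

theorem den_T_dvd {y : ℚ} (hy : Odd y.den) : (T y).den ∣ y.den := by
  obtain ⟨c, hc⟩ := exists_T_eq_div_den hy
  rw [hc]
  exact_mod_cast Rat.den_intCast_div_dvd c y.den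

theorem den_iterate_T_dvd {y : ℚ} (hy : Odd y.den) (j : ℕ) : (T^[j] y).den ∣ y.den := by
  induction j with
  | zero => rfl
  | succ j ih =>
    rw [iterate_succ_apply']
    exact (den_T_dvd (hy.of_dvd_nat ih)).trans ih

theorem den_iterate_T_of_isPeriodicPt {n : ℕ} (hn : n ≠ 0) {y : ℚ} (hper : IsPeriodicPt T n y)
    (hy : Odd y.den) (j : ℕ) : (T^[j] y).den = y.den := by
  refine Nat.dvd_antisymm (den_iterate_T_dvd hy j) ?_
  have hj : j ≤ n * j := Nat.le_mul_of_pos_left j (Nat.pos_of_ne_zero hn)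
  have hret : T^[n * j - j] (T^[j] y) = y := by
    rw [← iterate_add_apply, Nat.sub_add_cancel hj]
    exact (hper.mul_const j).eq
  calc y.den = (T^[n * j - j] (T^[j] y)).den := by rw [hret]
    _ ∣ (T^[j] y).den := den_iterate_T_dvd (hy.of_dvd_nat (den_iterate_T_dvd hy j)) _

theorem iterate_T_xF_ne {n : ℕ} (hn : n ≠ 0) {v w : Fin n → ℕ} (hv : ∀ i, v i = 0 ∨ v i = 1)
    (hw : ∀ i, w i = 0 ∨ w i = 1) (hrot : ∀ m, cyclicShift v m ≠ w) (j : ℕ) :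
    T^[j] (xF v) ≠ xF w := fun h =>
  hrot j (eq_of_xF_eq hn (fun _ => hv _) hw (by rwa [← iterate_T_xF hn hv]))

theorem den_iterate_T_xF {n : ℕ} (hn : n ≠ 0) {v : Fin n → ℕ} (h01 : ∀ i, v i = 0 ∨ v i = 1)
    (j : ℕ) : (T^[j] (xF v)).den = (xF v).den :=
  den_iterate_T_of_isPeriodicPt hn (isPeriodicPt_T_xF hn h01) (odd_den_xF hn v) j

/-- If `v₁` and `v₂` are `0-1` vectors of length `n` which are not cyclic rotations
of one another, then the `T`-cycles through `x(v₁)` and `x(v₂)` are disjoint; in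
particular, if moreover `ω(v₁) = ω(v₂)` and `x(v₁)`, `x(v₂)` both have denominator
`k`, then `D_k` contains two distinct cycles with the same invariants `λ = n` and
`ω` (the repetition phenomenon). -/
theorem stmt_16 (n : ℕ) (hn : 1 ≤ n) (v₁ v₂ : Fin n → ℕ)
    (h01 : (∀ j, v₁ j = 0 ∨ v₁ j = 1) ∧ (∀ j, v₂ j = 0 ∨ v₂ j = 1))
    (hrot : ∀ m : ℕ,
      (fun i : Fin n => v₁ ⟨((i : ℕ) + m) % n, Nat.mod_lt _ (by omega)⟩) ≠ v₂) :
    (∀ j : ℕ, j < n → T^[j] (xF v₁) ≠ xF v₂) ∧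
    (∀ k : ℕ, omegaF v₁ = omegaF v₂ → (xF v₁).den = k → (xF v₂).den = k →
      {y : ℚ | ∃ j : ℕ, T^[j] (xF v₁) = y} ≠ {y : ℚ | ∃ j : ℕ, T^[j] (xF v₂) = y} ∧
      (∀ y ∈ {y : ℚ | ∃ j : ℕ, T^[j] (xF v₁) = y}, y.den = k) ∧
      (∀ y ∈ {y : ℚ | ∃ j : ℕ, T^[j] (xF v₂) = y}, y.den = k)) := by
  obtain ⟨h01₁, h01₂⟩ := h01
  have hn0 : n ≠ 0 := by omega
  have hdisj : ∀ j, T^[j] (xF v₁) ≠ xF v₂ := iterate_T_xF_ne hn0 h01₁ h01₂ hrot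
  refine ⟨fun j _ => hdisj j, fun k _ hk₁ hk₂ => ⟨fun horb => ?_, ?_, ?_⟩⟩
  · obtain ⟨j, hj⟩ : xF v₂ ∈ {y : ℚ | ∃ j : ℕ, T^[j] (xF v₁) = y} := horb ▸ ⟨0, rfl⟩
    exact hdisj j hj
  · rintro y ⟨j, rfl⟩
    rw [den_iterate_T_xF hn0 h01₁, hk₁]
  · rintro y ⟨j, rfl⟩
    rw [den_iterate_T_xF hn0 h01₂, hk₂]
end
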